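/- arXiv:1710.02798 — 6 statements merged into one kernel-verified Lean document; each statement's English description precedes it below -/
import Mathlib

section
/- If r - λ(r) is a unit in R, then {1, r} is an S-basis of R: the map S × S → R sending (s,t) to s + t·r is bijective. In particular R is a free S-module of rank 2. -/
/-- If `r - λ r` is a unit, then `{1, r}` is an `S`-basis of `R`: the map
`S × S → R`, `(s, t) ↦ s + t·r` is bijective. -/
theorem stmt2 {R : Type*} [CommRing R] (l : R →+* R) (hl : ∀ x, l (l x) = x)
    (r : R) (h : IsUnit (r - l r))
    (S : Subring R) (hS : ∀ x, x ∈ S ↔ l x = x) :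
    Function.Bijective (fun p : S × S => (p.1 : R) + (p.2 : R) * r) := by
  obtain ⟨u, hu⟩ := h
  set v : R := ↑u⁻¹ with hv
  have huv : (r - l r) * v = 1 := by rw [← hu, hv]; exact u.mul_inv
  have hlu : l (r - l r) = -(r - l r) := by
    rw [map_sub, hl]; ring
  have hlv : l v = -v := by
    have h1 : (-(r - l r)) * l v = 1 := by
      rw [← hlu, ← map_mul, huv, map_one]
    calc l v = l v * ((r - l r) * v) := by rw [huv, mul_one]
      _ = -((-(r - l r)) * l v) * v := by ring
      _ = -v := by rw [h1]; ring
  constructor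
  · rintro ⟨⟨s, hs⟩, ⟨t, ht⟩⟩ ⟨⟨s', hs'⟩, ⟨t', ht'⟩⟩ hpq
    simp only at hpq ⊢
    have hs1 := (hS s).mp hs
    have ht1 := (hS t).mp ht
    have hs1' := (hS s').mp hs'
    have ht1' := (hS t').mp ht'
    have hpq' : s + t * r = s' + t' * r := hpq
    have h2 : s + t * l r = s' + t' * l r := by
      have := congrArg l hpq'
      rwa [map_add, map_add, map_mul, map_mul, hs1, ht1, hs1', ht1'] at this
    have h3 : (t - t') * (r - l r) = 0 := by linear_combination hpq' - h2
    have ht4 : t = t' := by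
      have : (t - t') * ((r - l r) * v) = 0 := by
        rw [← mul_assoc, h3, zero_mul]
      rw [huv, mul_one, sub_eq_zero] at this
      exact this
    have hs4 : s = s' := by
      rw [ht4] at hpq'
      exact add_right_cancel hpq'
    ext <;> simp [hs4, ht4]
  · intro x
    set t : R := (x - l x) * v with htdef
    have ht : l t = t := by
      rw [htdef, map_mul, map_sub, hl, hlv]; ring
    set s : R := x - t * r with hsdef
    have hs : l s = s := by
      rw [hsdef, map_sub, map_mul, ht]
      have : t * (r - l r) = x - l x := by
        rw [htdef, mul_assoc, mul_comm v, huv, mul_one]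
      linear_combination this
    refine ⟨⟨⟨s, (hS s).mpr hs⟩, ⟨t, (hS t).mpr ht⟩⟩, ?_⟩
    simp [hsdef]
end

section
/- If r - λ(r) is a unit in R, then setting t = r + λ(r) and n = λ(r)·r (both in S), one has r² - t·r + n = 0 and t² - 4n = (r - λ(r))² is a unit of S; consequently R is isomorphic as an S-algebra to S[X]/(X² - t·X + n), a polynomial quotient with invertible discriminant. -/
/-!
Write `d = r - λ r`, a unit with `λ d = -d`. Every `x ∈ R` is `p + q r` with `p, q` fixed by `λ`:
`q` is forced to be `(x - λ x) / d`. Conversely, applying `λ` to `a r + b = 0` with `a, b` fixed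
gives `a d = 0`, so `1, r` are independent over `S`. Hence `aeval r : S[X] → R` is surjective,
and since remainders modulo the monic `X² - tX + n` have degree `< 2`, its kernel is `(X² - tX + n)`.
-/

open Polynomial

namespace Polynomial

theorem ker_aeval_eq_span_singleton {S A : Type*} [CommRing S] [Ring A] [Algebra S A]
    {f : S[X]} (hf : f.Monic) {x : A} (hfx : aeval x f = 0)
    (hmin : ∀ q : S[X], q.degree < f.degree → aeval x q = 0 → q = 0) :
    RingHom.ker (aeval x) = Ideal.span {f} := by
  ext p
  rw [RingHom.mem_ker, Ideal.mem_span_singleton, ← modByMonic_eq_zero_iff_dvd hf]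
  constructor
  · intro hp
    nontriviality S
    exact hmin _ (degree_modByMonic_lt p hf) (by rwa [aeval_modByMonic_eq_self_of_root hfx])
  · intro hp
    rw [← aeval_modByMonic_eq_self_of_root hfx, hp, map_zero]

end Polynomial

section Involution

variable {R : Type*} [CommRing R] (l : R →+* R) {r : R}

theorem eq_zero_of_mul_add_eq_zero_of_isUnit_sub (h : IsUnit (r - l r)) {a b : R}
    (ha : l a = a) (hb : l b = b) (hab : a * r + b = 0) : a = 0 ∧ b = 0 := by
  have hconj : a * l r + b = 0 := by simpa [ha, hb] using congrArg l hab
  have ha0 : a = 0 := h.mul_left_eq_zero.mp (by linear_combination hab - hconj)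
  exact ⟨ha0, by linear_combination hab - r * ha0⟩

theorem exists_eq_add_mul_of_isUnit_sub (hl : ∀ x, l (l x) = x) (h : IsUnit (r - l r))
    (x : R) : ∃ p q, l p = p ∧ l q = q ∧ x = p + q * r := by
  obtain ⟨q, hq⟩ : r - l r ∣ x - l x := h.dvd
  have hlq : l q = q := by
    have hconj : l x - x = (l r - r) * l q := by simpa [hl] using congrArg l hq
    exact h.mul_right_inj.mp (by linear_combination hq + hconj)
  refine ⟨x - q * r, q, ?_, hlq, by ring⟩
  rw [map_sub, map_mul, hlq]
  linear_combination -hq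

variable {S : Subring R} (hS : ∀ x, x ∈ S ↔ l x = x)
include hS

theorem isUnit_of_isUnit_coe_of_mem_iff_fixed {s : S} (hs : IsUnit (s : R)) : IsUnit s := by
  obtain ⟨y, hy⟩ : (s : R) ∣ 1 := hs.dvd
  have hly : l y = y := by
    have hconj : 1 = (s : R) * l y := by simpa [(hS s).mp s.2] using congrArg l hy
    exact hs.mul_right_inj.mp (hconj.symm.trans hy)
  exact IsUnit.of_mul_eq_one ⟨y, (hS y).mpr hly⟩ (Subtype.ext hy.symm)

theorem eq_zero_of_degree_lt_two_of_aeval_eq_zero (h : IsUnit (r - l r)) {q : S[X]}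
    (hdeg : q.degree < 2) (hq : aeval r q = 0) : q = 0 := by
  rw [eq_X_add_C_of_degree_le_one (Order.le_of_lt_succ hdeg)] at hq ⊢
  have hfix : ∀ s : S, l s = s := fun s ↦ (hS s).mp s.2
  obtain ⟨h1, h0⟩ := eq_zero_of_mul_add_eq_zero_of_isUnit_sub l h (hfix _) (hfix _)
    (by simpa [Algebra.algebraMap_ofSubsemiring_apply] using hq)
  simp [show q.coeff 1 = 0 from Subtype.ext h1, show q.coeff 0 = 0 from Subtype.ext h0]

theorem aeval_surjective_of_isUnit_sub (hl : ∀ x, l (l x) = x) (h : IsUnit (r - l r)) :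
    Function.Surjective (aeval r : S[X] →ₐ[S] R) := by
  intro x
  obtain ⟨p, q, hp, hq, rfl⟩ := exists_eq_add_mul_of_isUnit_sub l hl h x
  exact ⟨C ⟨p, (hS p).mpr hp⟩ + C ⟨q, (hS q).mpr hq⟩ * X,
    by simp [Algebra.algebraMap_ofSubsemiring_apply]⟩

end Involution

/-- If `r - λ r` is a unit, then with `t = r + λ r` and `n = λ(r)·r` (both in the fixed
subring `S`) one has `r² - t r + n = 0`, `t² - 4n = (r - λ r)²` is a unit of `S`, and
`R ≅ S[X]/(X² - tX + n)` as `S`-algebras. -/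
theorem stmt3 {R : Type*} [CommRing R] (l : R →+* R) (hl : ∀ x, l (l x) = x)
    (r : R) (h : IsUnit (r - l r))
    (S : Subring R) (hS : ∀ x, x ∈ S ↔ l x = x)
    (t n : S) (ht : (t : R) = r + l r) (hn : (n : R) = l r * r) :
    r ^ 2 - (t : R) * r + (n : R) = 0 ∧
    ((t : R)) ^ 2 - 4 * (n : R) = (r - l r) ^ 2 ∧
    IsUnit (t ^ 2 - 4 * n) ∧
    Nonempty ((Polynomial S ⧸ Ideal.span {(X : Polynomial S) ^ 2 - C t * X + C n}) ≃ₐ[S] R) := by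
  have hroot : r ^ 2 - (t : R) * r + (n : R) = 0 := by rw [ht, hn]; ring
  have hdisc : ((t : R)) ^ 2 - 4 * (n : R) = (r - l r) ^ 2 := by rw [ht, hn]; ring
  refine ⟨hroot, hdisc, ?_, ?_⟩
  · refine isUnit_of_isUnit_coe_of_mem_iff_fixed l hS ?_
    push_cast
    exact hdisc ▸ h.pow 2
  set f : S[X] := X ^ 2 - C t * X + C n
  have hf : f.Monic := by unfold f; monicity!
  have hfr : aeval r f = 0 := by simpa [f, Algebra.algebraMap_ofSubsemiring_apply] using hroot
  have hker : RingHom.ker (aeval r : S[X] →ₐ[S] R) = Ideal.span {f} :=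
    ker_aeval_eq_span_singleton hf hfr fun q hq ↦
      eq_zero_of_degree_lt_two_of_aeval_eq_zero l hS h (hq.trans_le (by unfold f; compute_degree))
  exact ⟨(Ideal.quotientEquivAlgOfEq S hker.symm).trans
    (Ideal.quotientKerAlgEquivOfSurjective (aeval_surjective_of_isUnit_sub l hS hl h))⟩
end

section
/- Suppose no element r ∈ R satisfies r + λ(r) ∈ R^×. Then R is a local ring. Moreover, the residue field of R has characteristic 2, and λ induces the identity on the residue field of R. (Key step: for any r ∈ R, either λ(r)·r or 1 + λ(r)·r is a unit of S, and in the second case (1-r)·λ(1-r) = 1 + λ(r)r - (r + λ(r)) is a unit, so r or 1-r is a unit of R.) -/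
/-- If the fixed subring `S` of `λ` is local and no element `r ∈ R` has `r + λ r` a unit,
then `R` is local, `2` is a non-unit (the residue field has characteristic 2), and
`λ` induces the identity on the residue field (`r - λ r` is never a unit). -/
theorem stmt9 {R : Type*} [CommRing R] (l : R →+* R) (hl : ∀ x, l (l x) = x)
    (S : Subring R) (hS : ∀ x, x ∈ S ↔ l x = x) (hloc : IsLocalRing S)
    (hno : ∀ r : R, ¬ IsUnit (r + l r)) :
    IsLocalRing R ∧ ¬ IsUnit (2 : R) ∧ ∀ r : R, ¬ IsUnit (r - l r) := by
  have hnt : Nontrivial R := by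
    by_contra h
    rw [not_nontrivial_iff_subsingleton] at h
    exact hno 0 (isUnit_of_subsingleton _)
  have key : ∀ r : R, IsUnit r ∨ IsUnit (1 - r) := by
    intro r
    have hmem : -(l r * r) ∈ S := by
      rw [hS, map_neg, map_mul, hl, mul_comm]
    set a : S := ⟨-(l r * r), hmem⟩ with ha
    rcases IsLocalRing.isUnit_or_isUnit_one_sub_self a with h | h
    · left
      have : IsUnit ((a : R)) := h.map S.subtype
      have : IsUnit (l r * r) := by
        have := this.neg
        simpa [ha] using this
      exact isUnit_of_mul_isUnit_right this
    · right
      have hcmem : r + l r ∈ S := by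
        rw [hS, map_add, hl, add_comm]
      set c : S := ⟨r + l r, hcmem⟩ with hc
      have hcnu : ¬ IsUnit c := fun hcu => hno r (by simpa using hcu.map S.subtype)
      have hbc : IsUnit (1 - a - c) := by
        by_contra hx
        apply hcnu
        have : (1 - a - c) + c ∈ nonunits S := IsLocalRing.nonunits_add hx hcnu
        simp at this
        exact absurd h this
      have : IsUnit (((1 - a - c : S) : R)) := hbc.map S.subtype
      have heq : ((1 - a - c : S) : R) = (1 - r) * (1 - l r) := by
        push_cast [ha, hc]
        ring
      rw [heq] at this
      exact isUnit_of_mul_isUnit_left this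
  refine ⟨IsLocalRing.of_isUnit_or_isUnit_one_sub_self key, ?_, ?_⟩
  · have := hno 1
    simpa [one_add_one_eq_two] using this
  · intro r hu
    obtain ⟨v, hv⟩ := hu.exists_right_inv
    have hv' : (r - l r) * l v = -1 := by
      have := congrArg l hv
      rw [map_mul, map_sub, hl, map_one] at this
      linear_combination -this
    have hlv : l v = -v := by
      have h2 : (r - l r) * l v = (r - l r) * (-v) := by
        rw [hv']; linear_combination hv
      exact hu.mul_left_cancel h2
    apply hno (r * v)
    have : r * v + l (r * v) = 1 := by
      rw [map_mul, hlv]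
      linear_combination hv
    rw [this]
    exact isUnit_one
end

section
/- The maximal ideals of R form a single G-orbit under the induced action of G on the set of ideals. In particular, R has at most |G| maximal ideals, so R is semilocal. -/
open Polynomial Pointwise in
/-- If a finite group `G` acts on `R` by ring automorphisms and the fixed subring is local,
then the maximal ideals of `R` form a single `G`-orbit; in particular `R` is semilocal. -/
theorem stmt10 {G R : Type*} [Group G] [Finite G] [CommRing R] [MulSemiringAction G R]
    (S : Subring R) (hS : ∀ x, x ∈ S ↔ ∀ g : G, g • x = x) (hloc : IsLocalRing S) :
    (∀ M₁ M₂ : Ideal R, M₁.IsMaximal → M₂.IsMaximal →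
      ∃ g : G, Ideal.map (MulSemiringAction.toRingHom G R g) M₁ = M₂) ∧
    {I : Ideal R | I.IsMaximal}.Finite := by
  cases nonempty_fintype G
  classical
  -- R is integral over S
  have halg : Algebra.IsIntegral S R := by
    constructor
    intro x
    have hc : (↑(prodXSubSMul G R x).coeffs : Set R) ⊆ (S : Set R) := by
      intro c hcmem
      obtain ⟨n, -, rfl⟩ := Polynomial.mem_coeffs_iff.1 hcmem
      exact (hS _).2 fun g => prodXSubSMul.coeff G R x g n
    refine ⟨(prodXSubSMul G R x).toSubring S hc, ?_, ?_⟩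
    · rw [Polynomial.monic_toSubring]
      exact prodXSubSMul.monic G R x
    · have : algebraMap S R = S.subtype := rfl
      rw [Polynomial.eval₂_eq_eval_map, this, Polynomial.map_toSubring]
      exact prodXSubSMul.eval G R x
  -- every maximal ideal of R contracts to the maximal ideal of S
  have key : ∀ M : Ideal R, M.IsMaximal →
      M.comap (algebraMap S R) = IsLocalRing.maximalIdeal S := by
    intro M hM
    have : (M.comap (algebraMap S R)).IsMaximal :=
      Ideal.isMaximal_comap_of_isIntegral_of_isMaximal (R := S) (S := R) M
    exact IsLocalRing.eq_maximalIdeal this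
  -- each g • M₁ is maximal
  have hsmulmax : ∀ (g : G) (M : Ideal R), M.IsMaximal → (g • M : Ideal R).IsMaximal := by
    intro g M hM
    rw [Ideal.pointwise_smul_eq_comap]
    exact Ideal.comap_isMaximal_of_surjective _ (MulSemiringAction.toRingAut G R g).symm.surjective
  -- transitivity
  have main : ∀ M₁ M₂ : Ideal R, M₁.IsMaximal → M₂.IsMaximal →
      ∃ g : G, (g • M₁ : Ideal R) = M₂ := by
    intro M₁ M₂ h₁ h₂
    have hsub : (M₂ : Set R) ⊆ ⋃ g ∈ (↑(Finset.univ : Finset G) : Set G),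
        (((g • M₁ : Ideal R) : Ideal R) : Set R) := by
      intro x hx
      -- the "norm" of x lies in S
      have hNx : (∏ g : G, g • x) ∈ S := by
        refine (hS _).2 fun h => ?_
        rw [Finset.smul_prod']
        simp_rw [smul_smul]
        exact Fintype.prod_equiv (Equiv.mulLeft h) _ _ fun g => rfl
      have hN2 : (∏ g : G, g • x) ∈ M₂ := by
        rw [Finset.prod_eq_mul_prod_sdiff_singleton_of_mem (Finset.mem_univ (1 : G)) (fun g => g • x)]
        exact Ideal.mul_mem_right _ _ (by simpa using hx)
      have hN1 : (∏ g : G, g • x) ∈ M₁ := by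
        have hmem : (⟨_, hNx⟩ : S) ∈ M₂.comap (algebraMap S R) := hN2
        rw [key M₂ h₂, ← key M₁ h₁] at hmem
        exact hmem
      obtain ⟨g, -, hg⟩ := (h₁.isPrime.prod_mem_iff).1 hN1
      refine Set.mem_biUnion (by simp) (?_ : x ∈ (g⁻¹ • M₁ : Ideal R))
      rw [Ideal.mem_pointwise_smul_iff_inv_smul_mem]
      simpa using hg
    obtain ⟨g, -, hle⟩ := (Ideal.subset_union_prime (1 : G) 1
      (fun i _ _ _ => (hsmulmax i M₁ h₁).isPrime)).1 hsub
    exact ⟨g, ((h₂.eq_of_le (hsmulmax g M₁ h₁).ne_top hle).symm)⟩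
  constructor
  · intro M₁ M₂ h₁ h₂
    obtain ⟨g, hg⟩ := main M₁ M₂ h₁ h₂
    exact ⟨g, hg⟩
  · by_cases h : ∃ M : Ideal R, M.IsMaximal
    · obtain ⟨M, hM⟩ := h
      refine Set.Finite.subset (Set.finite_range (fun g : G => (g • M : Ideal R))) ?_
      intro I hI
      obtain ⟨g, hg⟩ := main M I hM hI
      exact ⟨g, hg⟩
    · have : {I : Ideal R | I.IsMaximal} = ∅ := by
        ext I; simpa using fun hI => h ⟨I, hI⟩
      rw [this]; exact Set.finite_empty
end

section
/- R is semilocal: it has at most two maximal ideals, and if it has exactly two maximal ideals M₁ ≠ M₂ then λ(M₁) = M₂. -/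
/-- If the fixed subring `S` of the involution `λ` is local, then `R` is semilocal with at
most two maximal ideals, and if there are two distinct maximal ideals then `λ` swaps them. -/
theorem stmt12 {R : Type*} [CommRing R] (l : R →+* R) (hl : ∀ x, l (l x) = x)
    (S : Subring R) (hS : ∀ x, x ∈ S ↔ l x = x) (hloc : IsLocalRing S) :
    (∀ M₁ M₂ M₃ : Ideal R, M₁.IsMaximal → M₂.IsMaximal → M₃.IsMaximal →
      M₁ = M₂ ∨ M₁ = M₃ ∨ M₂ = M₃) ∧
    (∀ M₁ M₂ : Ideal R, M₁.IsMaximal → M₂.IsMaximal → M₁ ≠ M₂ → Ideal.map l M₁ = M₂) := by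
  classical
  -- every element of R is integral over S
  have hint : S.subtype.IsIntegral := by
    intro x
    have ha : x + l x ∈ S := (hS _).2 (by simp [map_add, hl, add_comm])
    have hb : x * l x ∈ S := (hS _).2 (by simp [map_mul, hl, mul_comm])
    refine ⟨Polynomial.X ^ 2 - (Polynomial.C (⟨x + l x, ha⟩ : S) * Polynomial.X
      - Polynomial.C (⟨x * l x, hb⟩ : S)), ?_, ?_⟩
    · monicity!
    · simp only [Polynomial.eval₂_sub, Polynomial.eval₂_mul, Polynomial.eval₂_pow,
        Polynomial.eval₂_X, Polynomial.eval₂_C]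
      have e1 : S.subtype (⟨x + l x, ha⟩ : S) = x + l x := rfl
      have e2 : S.subtype (⟨x * l x, hb⟩ : S) = x * l x := rfl
      rw [e1, e2]
      ring
  -- contraction of a maximal ideal of R is the maximal ideal of S
  have hcontr : ∀ (M : Ideal R), M.IsMaximal → ∀ s : R, s ∈ S → s ∈ M → ∀ (N : Ideal R),
      N.IsMaximal → s ∈ N := by
    intro M hM s hsS hsM N hN
    haveI := hM; haveI := hN
    have h1 : (M.comap S.subtype).IsMaximal :=
      Ideal.isMaximal_comap_of_isIntegral_of_isMaximal' S.subtype hint M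
    have h2 : (N.comap S.subtype).IsMaximal :=
      Ideal.isMaximal_comap_of_isIntegral_of_isMaximal' S.subtype hint N
    have e1 : M.comap S.subtype = IsLocalRing.maximalIdeal S := IsLocalRing.eq_maximalIdeal h1
    have e2 : N.comap S.subtype = IsLocalRing.maximalIdeal S := IsLocalRing.eq_maximalIdeal h2
    have : (⟨s, hsS⟩ : S) ∈ M.comap S.subtype := by simpa [Ideal.mem_comap]
    rw [e1, ← e2] at this
    simpa [Ideal.mem_comap] using this
  -- key dichotomy
  have key : ∀ M₁ M₂ : Ideal R, M₁.IsMaximal → M₂.IsMaximal →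
      M₁ = M₂ ∨ M₁ = Ideal.comap l M₂ := by
    intro M₁ M₂ h1 h2
    haveI := h2
    have hcover : ∀ x ∈ M₁, x ∈ M₂ ∨ l x ∈ M₂ := by
      intro x hx
      have hxS : x * l x ∈ S := (hS _).2 (by simp [map_mul, hl, mul_comm])
      have : x * l x ∈ M₂ := hcontr M₁ h1 _ hxS (M₁.mul_mem_right _ hx) M₂ h2
      exact h2.isPrime.mem_or_mem this
    by_cases hA : M₁ ≤ M₂
    · exact Or.inl (h1.eq_of_le h2.ne_top hA)
    by_cases hB : M₁ ≤ Ideal.comap l M₂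
    · refine Or.inr (h1.eq_of_le ?_ hB)
      intro ht
      exact h2.ne_top (Ideal.eq_top_iff_one _ |>.2 (by
        have : (1 : R) ∈ Ideal.comap l M₂ := ht ▸ trivial
        simpa using this))
    · exfalso
      obtain ⟨a, haM, haN⟩ := Set.not_subset.1 hA
      obtain ⟨b, hbM, hbN⟩ := Set.not_subset.1 hB
      have hbN' : l b ∉ M₂ := fun h => hbN h
      have hab := hcover (a + b) (M₁.add_mem haM hbM)
      rcases hab with h | h
      · rcases hcover b hbM with hb | hb
        · exact haN (by simpa using M₂.sub_mem h hb)
        · exact hbN' hb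
      · rw [map_add] at h
        rcases hcover a haM with ha | ha
        · exact haN ha
        · exact hbN' (by simpa using M₂.sub_mem h ha)
  have hmapcomap : ∀ M : Ideal R, Ideal.map l (Ideal.comap l M) = M := by
    intro M
    have hsurj : Function.Surjective l := fun x => ⟨l x, hl x⟩
    have : l '' ((Ideal.comap l M : Ideal R) : Set R) = (M : Set R) := by
      have : ((Ideal.comap l M : Ideal R) : Set R) = l ⁻¹' M := rfl
      rw [this, Set.image_preimage_eq _ hsurj]
    rw [Ideal.map, this, Ideal.span_eq]
  constructor
  · intro M₁ M₂ M₃ h1 h2 h3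
    by_cases e12 : M₁ = M₂
    · exact Or.inl e12
    by_cases e13 : M₁ = M₃
    · exact Or.inr (Or.inl e13)
    have k2 := (key M₂ M₁ h2 h1).resolve_left (fun h => e12 h.symm)
    have k3 := (key M₃ M₁ h3 h1).resolve_left (fun h => e13 h.symm)
    exact Or.inr (Or.inr (k2.trans k3.symm))
  · intro M₁ M₂ h1 h2 hne
    have k := (key M₁ M₂ h1 h2).resolve_left hne
    rw [k, hmapcomap]
end

section
/- Assume 2 is a unit of S. Then Jac(R)² ⊆ Jac(S)·R, where Jac denotes the Jacobson radical. (Proof: for x ∈ Jac(R), both x + λ(x) and λ(x)·x lie in Jac(R) ∩ S ⊆ Jac(S), so x² ∈ Jac(S)·R; then use xy = ((x+y)² - x² - y²)/2.) -/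
/-!
For `x ∈ Jac(R)`, both `x + λ x` and `λ x * x` are fixed by `λ` and lie in `Jac(R)`, hence in
`Jac(S)`, because an element of `S` invertible in `R` is invertible in `S`. So
`x ^ 2 = x (x + λ x) - λ x * x ∈ Jac(S)·R`, and since `2` is invertible, polarization
`2xy = (x + y)² - x² - y²` gives all products.
-/

namespace Ideal

variable {R : Type*} [CommRing R]

theorem pow_two_le_of_forall_sq_mem (h2 : IsUnit (2 : R)) {I J : Ideal R}
    (h : ∀ x ∈ J, x ^ 2 ∈ I) : J ^ 2 ≤ I := by
  rw [pow_two, mul_le]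
  intro x hx y hy
  have h2xy : 2 * (x * y) ∈ I := by
    have hpol : 2 * (x * y) = (x + y) ^ 2 - x ^ 2 - y ^ 2 := by ring
    rw [hpol]
    exact I.sub_mem (I.sub_mem (h _ (J.add_mem hx hy)) (h x hx)) (h y hy)
  simpa [← mul_assoc] using I.mul_mem_left (h2.unit⁻¹ : Rˣ) h2xy

theorem mem_jacobson_bot_of_inv_mem {S : Subring R}
    (hS : ∀ u : Rˣ, (u : R) ∈ S → ((u⁻¹ : Rˣ) : R) ∈ S) {s : S}
    (hs : (s : R) ∈ jacobson (⊥ : Ideal R)) : s ∈ jacobson (⊥ : Ideal S) := by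
  rw [mem_jacobson_bot] at hs ⊢
  intro y
  obtain ⟨u, hu⟩ := hs y
  have hmem : (u : R) ∈ S := hu ▸ (s * y + 1).2
  exact ⟨⟨⟨u, hmem⟩, ⟨_, hS u hmem⟩, Subtype.ext u.mul_inv, Subtype.ext u.inv_mul⟩,
    Subtype.ext hu⟩

end Ideal

/-- If the fixed subring `S` of `λ` is local and `2 ∈ S^×`, then
`Jac(R)² ⊆ Jac(S)·R`. -/
theorem stmt14 {R : Type*} [CommRing R] (l : R →+* R) (hl : ∀ x, l (l x) = x)
    (S : Subring R) (hS : ∀ x, x ∈ S ↔ l x = x) [IsLocalRing S]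
    (h2 : IsUnit (2 : S)) :
    Ideal.jacobson (⊥ : Ideal R) ^ 2 ≤ Ideal.map S.subtype (IsLocalRing.maximalIdeal S) := by
  set J := Ideal.jacobson (⊥ : Ideal R)
  set K := Ideal.map S.subtype (IsLocalRing.maximalIdeal S)
  have hJK : ∀ s : S, (s : R) ∈ J → (s : R) ∈ K := fun s hs => by
    refine Ideal.mem_map_of_mem _ ?_
    rw [← IsLocalRing.jacobson_eq_maximalIdeal ⊥ bot_ne_top]
    refine Ideal.mem_jacobson_bot_of_inv_mem (fun u hu => ?_) hs
    rw [hS] at hu ⊢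
    exact Units.eq_inv_of_mul_eq_one_left (by rw [← hu, ← map_mul, u.mul_inv, map_one])
  have hlJ : ∀ x ∈ J, l x ∈ J := fun x hx => by
    simpa [J, Ideal.map_jacobson_of_bijective (Function.Involutive.bijective hl)] using
      Ideal.mem_map_of_mem l hx
  have h2R : IsUnit (2 : R) := by simpa only [map_ofNat] using h2.map S.subtype
  refine Ideal.pow_two_le_of_forall_sq_mem h2R fun x hx => ?_
  have htrace := hJK ⟨x + l x, by rw [hS, map_add, hl, add_comm]⟩ (J.add_mem hx (hlJ x hx))
  have hnorm := hJK ⟨l x * x, by rw [hS, map_mul, hl, mul_comm]⟩ (J.mul_mem_right x (hlJ x hx))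
  rw [show x ^ 2 = x * (x + l x) - l x * x by ring]
  exact K.sub_mem (K.mul_mem_left x htrace) hnorm
end
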